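/- Let K be an even hyperbolic lattice of signature (1, n−1) and let (c_i)_{i∈S} be finitely many integral vectors in the rational closure of the positive cone satisfying Σ a_i c_i = 0 with nonzero integers a_i. Then there exists a Euclidean norm ‖·‖ on K⊗ℝ and the open set U where λ ↦ Σ a_i|λ·c_i| does not vanish satisfies: −Q(λ) ≥ ‖λ‖ for all λ ∈ U ∩ K. -/

import Mathlib

/-- An even symmetric bilinear form of signature `(1, n+1)` on `ℝ^{n+2}`. -/
def bh (n : ℕ) (x y : Fin (n+2) → ℝ) : ℝ :=
  x 0 * y 1 + x 1 * y 0 - 2 * ∑ i ∈ Finset.Ioi (1 : Fin (n+2)), x i * y i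

/-- The quadratic form `Q(x) = (1/2) x·x`. -/
noncomputable def qh (n : ℕ) (x : Fin (n+2) → ℝ) : ℝ := bh n x x / 2

/-- Lattice vectors: vectors with integer coordinates. -/
def intVec (n : ℕ) (x : Fin (n+2) → ℝ) : Prop := ∀ i, ∃ m : ℤ, x i = (m : ℝ)

/-- The positive cone of the hyperbolic space. -/
def posConeH (n : ℕ) : Set (Fin (n+2) → ℝ) := {x | 0 < bh n x x ∧ 0 < x 0 + x 1}

/-!
Put `s(x) = x₀ + x₁`. Then `2 x·y = s(x) s(y) - ⟪φ x, φ y⟫` for a linear map `φ` to Euclidean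
space (`spacelikePart`), and `‖φ c‖ ≤ s(c)` on the closed positive cone. If
`Σ aᵢ |λ·cᵢ| ≠ 0`, the integers `λ·cᵢ` cannot all have the same sign (else the sum is
`± λ·Σ aᵢcᵢ = 0`), so some `λ·cᵢ` with `|λ·cᵢ| ≥ 1` has the sign opposite to `s(λ)`;
Cauchy–Schwarz against that `cᵢ` gives `‖φ λ‖ - |s(λ)| ≥ 2 / B` with `B = Σ ‖φ cᵢ‖`. Hence
`-4 Q(λ) = (‖φ λ‖ - |s(λ)|)(‖φ λ‖ + |s(λ)|) ≥ (2 / B)(‖φ λ‖ + |s(λ)|)`, and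
`‖φ λ‖ + |s(λ)|` dominates the standard Euclidean norm of `λ`.
-/

open Finset

lemma Fin.sum_Ioi_one {M : Type*} [AddCommMonoid M] (n : ℕ) (g : Fin (n+2) → M) :
    ∑ i ∈ Ioi (1 : Fin (n+2)), g i = ∑ i : Fin n, g i.succ.succ := by
  rw [← Fin.succ_zero_eq_one, Fin.sum_Ioi_succ, Fin.sum_Ioi_zero]

def spacelikePart (n : ℕ) (x : Fin (n+2) → ℝ) : EuclideanSpace ℝ (Fin (n+1)) :=
  WithLp.toLp 2 (Fin.cons (x 0 - x 1) fun i => 2 * x i.succ.succ)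

lemma two_mul_bh_eq (n : ℕ) (x y : Fin (n+2) → ℝ) :
    2 * bh n x y =
      (x 0 + x 1) * (y 0 + y 1) - inner ℝ (spacelikePart n x) (spacelikePart n y) := by
  simp only [bh, spacelikePart, PiLp.inner_apply, Fin.sum_univ_succ, Fin.cons_zero, Fin.cons_succ,
    Fin.sum_Ioi_one, RCLike.inner_apply, conj_trivial]
  have h : ∑ i : Fin n, 2 * y i.succ.succ * (2 * x i.succ.succ)
      = 4 * ∑ i : Fin n, x i.succ.succ * y i.succ.succ := by
    rw [mul_sum]; exact sum_congr rfl fun _ _ => by ring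
  rw [h]
  ring

lemma four_mul_qh_eq (n : ℕ) (x : Fin (n+2) → ℝ) :
    4 * qh n x = (x 0 + x 1) ^ 2 - ‖spacelikePart n x‖ ^ 2 := by
  rw [← real_inner_self_eq_norm_sq, qh, sq, ← two_mul_bh_eq]
  ring

lemma norm_toLp_le_abs_add_norm_spacelikePart (n : ℕ) (x : Fin (n+2) → ℝ) :
    ‖WithLp.toLp 2 x‖ ≤ |x 0 + x 1| + ‖spacelikePart n x‖ := by
  have hsq : ‖WithLp.toLp 2 x‖ ^ 2 ≤ (x 0 + x 1) ^ 2 + ‖spacelikePart n x‖ ^ 2 := by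
    simp only [EuclideanSpace.norm_sq_eq, spacelikePart, Fin.sum_univ_succ, Fin.cons_zero,
      Fin.cons_succ, Fin.succ_zero_eq_one, Real.norm_eq_abs, sq_abs]
    have h : ∑ i : Fin n, x i.succ.succ ^ 2 ≤ ∑ i : Fin n, (2 * x i.succ.succ) ^ 2 :=
      sum_le_sum fun i _ => by nlinarith [sq_nonneg (x i.succ.succ)]
    nlinarith [sq_nonneg (x 0), sq_nonneg (x 1)]
  refine (pow_le_pow_iff_left₀ (norm_nonneg _) (by positivity) two_ne_zero).mp ?_
  nlinarith [sq_abs (x 0 + x 1), abs_nonneg (x 0 + x 1), norm_nonneg (spacelikePart n x)]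

def bhRight (n : ℕ) (x : Fin (n+2) → ℝ) : (Fin (n+2) → ℝ) →ₗ[ℝ] ℝ where
  toFun := bh n x
  map_add' y z := by
    simp only [bh, Pi.add_apply, mul_add, sum_add_distrib]
    ring
  map_smul' r y := by
    simp only [bh, Pi.smul_apply, smul_eq_mul, RingHom.id_apply, mul_left_comm _ r, ← mul_sum]
    ring

lemma exists_int_bh_eq {n : ℕ} {x y : Fin (n+2) → ℝ} (hx : intVec n x) (hy : intVec n y) :
    ∃ m : ℤ, bh n x y = m := by
  choose f hf using hx
  choose g hg using hy
  refine ⟨f 0 * g 1 + f 1 * g 0 - 2 * ∑ i ∈ Ioi 1, f i * g i, ?_⟩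
  simp only [bh, hf, hg]
  push_cast
  ring

lemma norm_spacelikePart_le_of_mem_closure {n : ℕ} {c : Fin (n+2) → ℝ}
    (hc : c ∈ closure (posConeH n)) : ‖spacelikePart n c‖ ≤ c 0 + c 1 := by
  have hclosed : IsClosed ({z | 0 ≤ bh n z z} ∩ {z : Fin (n+2) → ℝ | 0 ≤ z 0 + z 1}) :=
    (isClosed_le continuous_const (by unfold bh; fun_prop)).inter
      (isClosed_le continuous_const (by fun_prop))
  have hsub : posConeH n ⊆ {z | 0 ≤ bh n z z} ∩ {z | 0 ≤ z 0 + z 1} :=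
    fun _ hz => ⟨hz.1.le, hz.2.le⟩
  obtain ⟨hQ, hs⟩ : 0 ≤ bh n c c ∧ 0 ≤ c 0 + c 1 := closure_minimal hsub hclosed hc
  have h := two_mul_bh_eq n c c
  rw [real_inner_self_eq_norm_sq] at h
  exact (pow_le_pow_iff_left₀ (norm_nonneg _) hs two_ne_zero).mp (by nlinarith)

lemma exists_pos_and_exists_neg_of_sum_mul_abs_ne_zero {R ι : Type*} [CommRing R] [LinearOrder R]
    [IsOrderedRing R] (S : Finset ι) (a f : ι → R) (hrel : ∑ i ∈ S, a i * f i = 0)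
    (hne : ∑ i ∈ S, a i * |f i| ≠ 0) : (∃ i ∈ S, 0 < f i) ∧ ∃ i ∈ S, f i < 0 := by
  constructor
  · by_contra! h
    refine hne ?_
    rw [← neg_eq_zero, ← sum_neg_distrib, ← hrel]
    exact sum_congr rfl fun i hi => by rw [abs_of_nonpos (h i hi)]; ring
  · by_contra! h
    exact hne (hrel ▸ sum_congr rfl fun i hi => by rw [abs_of_nonneg (h i hi)])

lemma exists_one_le_bh_and_exists_bh_le_neg_one {n : ℕ} {ι : Type*} {S : Finset ι}
    {c : ι → (Fin (n+2) → ℝ)} {a : ι → ℝ} {x : Fin (n+2) → ℝ} (hx : intVec n x)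
    (hc : ∀ i ∈ S, intVec n (c i)) (hrel : ∑ i ∈ S, a i • c i = 0)
    (hne : ∑ i ∈ S, a i * |bh n x (c i)| ≠ 0) :
    (∃ i ∈ S, 1 ≤ bh n x (c i)) ∧ ∃ i ∈ S, bh n x (c i) ≤ -1 := by
  have hrel' : ∑ i ∈ S, a i * bh n x (c i) = 0 := by
    have h := congrArg (bhRight n x) hrel
    rw [map_sum, map_zero] at h
    simpa [bhRight] using h
  obtain ⟨⟨i, hi, hpos⟩, j, hj, hneg⟩ :=
    exists_pos_and_exists_neg_of_sum_mul_abs_ne_zero S a _ hrel' hne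
  obtain ⟨m, hm⟩ := exists_int_bh_eq hx (hc i hi)
  obtain ⟨k, hk⟩ := exists_int_bh_eq hx (hc j hj)
  refine ⟨⟨i, hi, ?_⟩, j, hj, ?_⟩
  · rw [hm] at hpos ⊢
    exact_mod_cast Int.cast_pos.mp hpos
  · rw [hk] at hneg ⊢
    exact_mod_cast Int.le_sub_one_of_lt (Int.cast_lt_zero.mp hneg)

lemma two_le_mul_norm_spacelikePart {n : ℕ} {x c : Fin (n+2) → ℝ}
    (hc : c ∈ closure (posConeH n)) (hbh : 1 ≤ |bh n x c|) (hsign : (x 0 + x 1) * bh n x c ≤ 0) :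
    2 ≤ (‖spacelikePart n x‖ - |x 0 + x 1|) * ‖spacelikePart n c‖ := by
  have hcs := abs_real_inner_le_norm (spacelikePart n x) (spacelikePart n c)
  have hN := norm_spacelikePart_le_of_mem_closure hc
  have h2 := two_mul_bh_eq n x c
  rcases le_or_gt 0 (bh n x c) with hb | hb
  · rw [abs_of_nonneg hb] at hbh
    have hs : x 0 + x 1 ≤ 0 := nonpos_of_mul_nonpos_left hsign (by linarith)
    rw [abs_of_nonpos hs]
    nlinarith [neg_abs_le (inner ℝ (spacelikePart n x) (spacelikePart n c))]
  · rw [abs_of_neg hb] at hbh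
    have hs : 0 ≤ x 0 + x 1 := by nlinarith
    rw [abs_of_nonneg hs]
    nlinarith [le_abs_self (inner ℝ (spacelikePart n x) (spacelikePart n c))]

lemma two_le_mul_sum_norm_spacelikePart {n : ℕ} {ι : Type*} {S : Finset ι}
    {c : ι → (Fin (n+2) → ℝ)} {x : Fin (n+2) → ℝ} (hc : ∀ i ∈ S, c i ∈ closure (posConeH n))
    (hpos : ∃ i ∈ S, 1 ≤ bh n x (c i)) (hneg : ∃ i ∈ S, bh n x (c i) ≤ -1) :
    2 ≤ (‖spacelikePart n x‖ - |x 0 + x 1|) * ∑ i ∈ S, ‖spacelikePart n (c i)‖ := by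
  obtain ⟨i, hi, hbh, hsign⟩ : ∃ i ∈ S, 1 ≤ |bh n x (c i)| ∧ (x 0 + x 1) * bh n x (c i) ≤ 0 := by
    rcases le_total 0 (x 0 + x 1) with hs | hs
    · obtain ⟨i, hi, h⟩ := hneg
      exact ⟨i, hi, by rw [abs_of_neg (by linarith)]; linarith, by nlinarith⟩
    · obtain ⟨i, hi, h⟩ := hpos
      exact ⟨i, hi, by rw [abs_of_pos (by linarith)]; linarith, by nlinarith⟩
  have h := two_le_mul_norm_spacelikePart (hc i hi) hbh hsign
  have hgap : 0 ≤ ‖spacelikePart n x‖ - |x 0 + x 1| := by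
    nlinarith [norm_nonneg (spacelikePart n (c i))]
  calc 2 ≤ (‖spacelikePart n x‖ - |x 0 + x 1|) * ‖spacelikePart n (c i)‖ := h
    _ ≤ _ := mul_le_mul_of_nonneg_left
      (single_le_sum (f := fun i => ‖spacelikePart n (c i)‖) (fun _ _ => norm_nonneg _) hi) hgap

lemma norm_toLp_le_neg_qh {n : ℕ} {x : Fin (n+2) → ℝ} {B : ℝ} (hB : 0 ≤ B)
    (hgap : 2 ≤ (‖spacelikePart n x‖ - |x 0 + x 1|) * B) :
    (2 * (B + 1))⁻¹ * ‖WithLp.toLp 2 x‖ ≤ -qh n x := by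
  have hq := four_mul_qh_eq n x
  have hx := norm_toLp_le_abs_add_norm_spacelikePart n x
  have hm : 0 ≤ |x 0 + x 1| + ‖spacelikePart n x‖ := by positivity
  have hgap' : 2 ≤ (‖spacelikePart n x‖ - |x 0 + x 1|) * (B + 1) := by nlinarith
  rw [inv_mul_le_iff₀ (by positivity)]
  nlinarith [sq_abs (x 0 + x 1), mul_le_mul_of_nonneg_right hgap' hm]

theorem euclidean_lower_bound_general (n : ℕ) {ι : Type*} (S : Finset ι)
    (c : ι → (Fin (n+2) → ℝ)) (a : ι → ℤ)
    (hc : ∀ i ∈ S, intVec n (c i) ∧ c i ∈ closure (posConeH n))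
    (hrel : ∑ i ∈ S, (a i : ℝ) • c i = 0) :
    ∃ T : (Fin (n+2) → ℝ) ≃ₗ[ℝ] EuclideanSpace ℝ (Fin (n+2)),
      ∀ lam : Fin (n+2) → ℝ, intVec n lam →
        (∑ i ∈ S, (a i : ℝ) * |bh n lam (c i)|) ≠ 0 →
        ‖T lam‖ ≤ -(qh n lam) := by
  set B := ∑ i ∈ S, ‖spacelikePart n (c i)‖
  have hB : 0 ≤ B := sum_nonneg fun _ _ => norm_nonneg _
  -- `B + 1` rather than `B`: the scale must be nonzero even when every `φ cᵢ` vanishes.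
  refine ⟨(LinearEquiv.smulOfNeZero ℝ _ (2 * (B + 1))⁻¹ (by positivity)).trans
    (WithLp.linearEquiv 2 ℝ _).symm, fun lam hlam hne => ?_⟩
  obtain ⟨hpos, hneg⟩ := exists_one_le_bh_and_exists_bh_le_neg_one hlam
    (fun i hi => (hc i hi).1) hrel hne
  have hgap := two_le_mul_sum_norm_spacelikePart (fun i hi => (hc i hi).2) hpos hneg
  simpa [norm_smul, abs_of_pos (by positivity : 0 < B + 1)] using norm_toLp_le_neg_qh hB hgap

/-- If `(cᵢ)` are integral vectors in the rational closure of the positive cone with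
`Σ aᵢcᵢ = 0` (`aᵢ` nonzero integers), then there is a Euclidean norm `‖·‖` on `K ⊗ ℝ`
such that `−Q(λ) ≥ ‖λ‖` for every lattice vector `λ` where `Σ aᵢ|λ·cᵢ|` does not
vanish. (A Euclidean norm is the pullback of the standard norm under a linear
isomorphism with Euclidean space.) -/
theorem euclidean_lower_bound (n : ℕ) {ι : Type*} (S : Finset ι)
    (c : ι → (Fin (n+2) → ℝ)) (a : ι → ℤ)
    (hc : ∀ i ∈ S, intVec n (c i) ∧ c i ∈ closure (posConeH n))
    (ha : ∀ i ∈ S, a i ≠ 0)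
    (hrel : ∑ i ∈ S, (a i : ℝ) • c i = 0) :
    ∃ T : (Fin (n+2) → ℝ) ≃ₗ[ℝ] EuclideanSpace ℝ (Fin (n+2)),
      ∀ lam : Fin (n+2) → ℝ, intVec n lam →
        (∑ i ∈ S, (a i : ℝ) * |bh n lam (c i)|) ≠ 0 →
        ‖T lam‖ ≤ -(qh n lam) :=
  euclidean_lower_bound_general n S c a hc hrel
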